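/- As s ranges over R_{n−1} (partial permutations of {1,...,n−1}, viewed inside R_n), the products T_i·s range bijectively over {σ ∈ R_n : σ(n) = i}, where T_i = t_{i+1}t_{i+2}···t_n is a product of adjacent transpositions t_j = (j−1,j) and T_n = identity. -/

import Mathlib

/-- The adjacent transposition `t_j = (j−1, j)` of `{1,...,n}` (as a permutation of
`Fin n`, entries written `1`-based), for `2 ≤ j ≤ n`; the identity otherwise. -/
def tswap (n j : ℕ) : Equiv.Perm (Fin n) :=
  if h : 2 ≤ j ∧ j ≤ n then
    Equiv.swap ⟨j - 2, by omega⟩ ⟨j - 1, by omega⟩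
  else 1

/-- The coset representative `T_i = t_{i+1} t_{i+2} ⋯ t_n` (so `T_n` is the identity);
multiplication of permutations is composition with maps acting on the left. -/
def Tlow (n i : ℕ) : Equiv.Perm (Fin n) :=
  ((List.range' (i + 1) (n - i)).map (tswap n)).prod

lemma Tlow_succ (n i : ℕ) (h : i < n) :
    Tlow n i = tswap n (i + 1) * Tlow n (i + 1) := by
  unfold Tlow
  have h1 : n - i = (n - (i + 1)) + 1 := by omega
  rw [h1, List.range'_succ, List.map_cons, List.prod_cons]

lemma Tlow_apply_aux (n : ℕ) : ∀ k i, ∀ (h1 : 1 ≤ i) (h2 : i ≤ n) (_ : n - i = k),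
    Tlow n i ⟨n - 1, Nat.sub_lt (Nat.lt_of_lt_of_le h1 h2) Nat.one_pos⟩ = ⟨i - 1, Nat.lt_of_lt_of_le (Nat.sub_lt h1 Nat.one_pos) h2⟩ := by
  intro k
  induction k with
  | zero =>
    intro i h1 h2 hk
    have hin : i = n := by omega
    subst hin
    simp [Tlow]
  | succ k ih =>
    intro i h1 h2 hk
    have hlt : i < n := by omega
    rw [Tlow_succ n i hlt, Equiv.Perm.mul_apply,
      ih (i + 1) (by omega) (by omega) (by omega)]
    unfold tswap
    rw [dif_pos ⟨by omega, by omega⟩]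
    have he : (⟨i + 1 - 1, by omega⟩ : Fin n) = ⟨i + 1 - 1, by omega⟩ := rfl
    rw [show (⟨i + 1 - 1, by omega⟩ : Fin n) = ⟨i + 1 - 1, by omega⟩ from rfl,
      Equiv.swap_apply_right]
    simp only [Fin.mk.injEq]; omega

lemma Tlow_apply (n i : ℕ) (h1 : 1 ≤ i) (h2 : i ≤ n) :
    Tlow n i ⟨n - 1, Nat.sub_lt (Nat.lt_of_lt_of_le h1 h2) Nat.one_pos⟩ = ⟨i - 1, Nat.lt_of_lt_of_le (Nat.sub_lt h1 Nat.one_pos) h2⟩ :=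
  Tlow_apply_aux n (n - i) i h1 h2 rfl

/-- As `s` ranges over `R_{n−1}` (partial permutations of `{1,...,n}` fixing every
`j > n−1`, i.e. with `σ(j) = j` for `j > n−1`), the products `T_i ∘ s` range
bijectively over `{σ ∈ R_n : σ(n) = i}`. -/
theorem rook_monoid_coset_bijection (n i : ℕ) (hi1 : 1 ≤ i) (hi2 : i ≤ n) :
    Set.BijOn (fun s : Fin n ≃. Fin n => s.trans (Tlow n i).toPEquiv)
      {s : Fin n ≃. Fin n | ∀ x : Fin n, n - 1 ≤ (x : ℕ) → s x = some x}
      {σ : Fin n ≃. Fin n | σ ⟨n - 1, by omega⟩ = some ⟨i - 1, by omega⟩} := by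
  have hn : 1 ≤ n := le_trans hi1 hi2
  set T := Tlow n i with hTdef
  have hT : T ⟨n - 1, by omega⟩ = ⟨i - 1, by omega⟩ := Tlow_apply n i hi1 hi2
  have hTsymm : T.symm ⟨i - 1, by omega⟩ = ⟨n - 1, by omega⟩ := by
    rw [← hT, Equiv.symm_apply_apply]
  have htrans : ∀ (s : Fin n ≃. Fin n) (f : Equiv.Perm (Fin n)) (x : Fin n),
      (s.trans f.toPEquiv) x = (s x).bind (fun y => some (f y)) := by
    intro s f x
    rfl
  constructor
  · -- MapsTo
    intro s hs
    have h1 : s ⟨n - 1, by omega⟩ = some ⟨n - 1, by omega⟩ := hs _ (by simp)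
    simp only [Set.mem_setOf_eq, htrans, h1, Option.bind_some, hT]
  constructor
  · -- InjOn
    intro s1 _ s2 _ h
    have := congrArg (fun u : Fin n ≃. Fin n => u.trans T.symm.toPEquiv) h
    simpa [PEquiv.trans_assoc, ← Equiv.toPEquiv_trans, Equiv.self_trans_symm,
      Equiv.toPEquiv_refl, PEquiv.trans_refl] using this
  · -- SurjOn
    intro σ hσ
    refine ⟨σ.trans T.symm.toPEquiv, ?_, ?_⟩
    · intro x hx
      simp only [Set.mem_setOf_eq] at hσ
      obtain ⟨xv, hxv⟩ := x
      simp only at hx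
      have hEq : xv = n - 1 := by omega
      subst hEq
      rw [htrans, hσ, Option.bind_some, hTsymm]
    · simp [PEquiv.trans_assoc, ← Equiv.toPEquiv_trans, Equiv.symm_trans_self,
        Equiv.toPEquiv_refl, PEquiv.trans_refl]
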